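/- Let σ ∈ C¹(Ω, Ω) be a measure-preserving reversibility of ż = F(z), and let γ be a cycle (closed orbit) of the system with σ(γ) = γ, containing a point z with σ(z) ≠ z. Then γ contains at least two distinct points where div F vanishes. -/

import Mathlib

/-!
Since `σ ∘ φ_t = φ_{-t} ∘ σ`, the involution `σ` pushes `F` forward to `-F`; as `σ` also preserves
volume, `div F` is odd under `σ`: `div F (σ x) = -div F x`. Because `σ` is only `C¹`, this is proved
weakly, pairing `div F` with test functions and transporting them along `σ`.
On the cycle, `σ` reverses time: if `φ_{t₀} z = σ z` then `σ (φ_s z) = φ_{t₀ - s} z`. The periods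
form a closed subgroup of `ℝ` which is not all of `ℝ` (as `σ z ≠ z`), hence is `aℤ` with `a ≠ 0`.
The parameters `t₀/2` and `(t₀ + a)/2` are fixed by `s ↦ t₀ - s` modulo `a`, so `div F` vanishes at
the two corresponding points, which are distinct because `a/2` is not a period.
-/

open MeasureTheory Set Function
open scoped ContDiff

section Divergence

variable {ι : Type*} [Fintype ι] [DecidableEq ι]

noncomputable def divergence (F : (ι → ℝ) → ι → ℝ) (x : ι → ℝ) : ℝ :=
  ∑ i, fderiv ℝ F x (Pi.single i 1) i

theorem ContinuousLinearMap.sum_apply_single_mul (L : (ι → ℝ) →L[ℝ] ℝ) (v : ι → ℝ) :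
    ∑ i, L (Pi.single i 1) * v i = L v := by
  conv_rhs => rw [← Finset.univ_sum_single v, map_sum]
  refine Finset.sum_congr rfl fun i _ => ?_
  rw [mul_comm, ← smul_eq_mul, ← L.map_smul, ← Pi.single_smul, smul_eq_mul, mul_one]

theorem ContDiffOn.continuousOn_fderiv_apply_single_apply {Ω : Set (ι → ℝ)} (hΩ : IsOpen Ω)
    {F : (ι → ℝ) → ι → ℝ} (hF : ContDiffOn ℝ 1 F Ω) (i : ι) :
    ContinuousOn (fun x => fderiv ℝ F x (Pi.single i 1) i) Ω :=
  (continuous_apply i).comp_continuousOn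
    ((ContinuousLinearMap.apply ℝ _ (Pi.single i 1)).continuous.comp_continuousOn
      (hF.continuousOn_fderiv_of_isOpen hΩ le_rfl))

theorem ContDiffOn.continuousOn_divergence {Ω : Set (ι → ℝ)} (hΩ : IsOpen Ω)
    {F : (ι → ℝ) → ι → ℝ} (hF : ContDiffOn ℝ 1 F Ω) : ContinuousOn (divergence F) Ω :=
  continuousOn_finsetSum _ fun i _ => hF.continuousOn_fderiv_apply_single_apply hΩ i

end Divergence

theorem ContDiffOn.contDiff_of_tsupport_subset {E F : Type*} [NormedAddCommGroup E]
    [NormedSpace ℝ E] [NormedAddCommGroup F] [NormedSpace ℝ F] {f : E → F} {Ω : Set E}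
    {n : WithTop ℕ∞}
    (hf : ContDiffOn ℝ n f Ω) (hΩ : IsOpen Ω) (hsupp : tsupport f ⊆ Ω) : ContDiff ℝ n f := by
  refine contDiff_iff_contDiffAt.2 fun x => ?_
  by_cases hx : x ∈ Ω
  · exact hf.contDiffAt (hΩ.mem_nhds hx)
  · exact contDiffAt_const.congr_of_eventuallyEq
      (notMem_tsupport_iff_eventuallyEq.1 fun h => hx (hsupp h))

theorem integrable_mul_of_tsupport_subset {X : Type*} [TopologicalSpace X] [MeasurableSpace X]
    [OpensMeasurableSpace X] {μ : Measure X} [IsFiniteMeasureOnCompacts μ] {Ω : Set X}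
    (hΩ : IsOpen Ω) {ψ g : X → ℝ}
    (hψ : Continuous ψ) (hψc : HasCompactSupport ψ) (hψΩ : tsupport ψ ⊆ Ω)
    (hg : ContinuousOn g Ω) : Integrable (fun x => ψ x * g x) μ :=
  ((hψ.continuousOn.mul hg).continuous_of_tsupport_subset hΩ
    ((tsupport_mul_subset_left).trans hψΩ)).integrable_of_hasCompactSupport hψc.mul_right

section IntegrationByParts

variable {ι : Type*} [Fintype ι] [DecidableEq ι] {Ω : Set (ι → ℝ)} {F : (ι → ℝ) → ι → ℝ}
  {ψ : (ι → ℝ) → ℝ}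

theorem integrable_fderiv_apply_single_mul (hΩ : IsOpen Ω) (hF : ContinuousOn F Ω)
    (hψ : ContDiff ℝ 1 ψ) (hψc : HasCompactSupport ψ) (hψΩ : tsupport ψ ⊆ Ω) (i : ι) :
    Integrable fun x => fderiv ℝ ψ x (Pi.single i 1) * F x i :=
  integrable_mul_of_tsupport_subset hΩ
    ((hψ.continuous_fderiv_apply one_ne_zero).comp (continuous_id.prodMk continuous_const))
    (hψc.fderiv_apply ℝ _) ((tsupport_fderiv_apply_subset ℝ _).trans hψΩ)
    ((continuous_apply i).comp_continuousOn hF)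

theorem integral_mul_fderiv_apply_single_eq_neg (hΩ : IsOpen Ω) (hF : ContDiffOn ℝ 1 F Ω)
    (hψ : ContDiff ℝ 1 ψ) (hψc : HasCompactSupport ψ) (hψΩ : tsupport ψ ⊆ Ω) (i : ι) :
    ∫ x, ψ x * fderiv ℝ F x (Pi.single i 1) i = -∫ x, fderiv ℝ ψ x (Pi.single i 1) * F x i := by
  have hFd : ∀ x ∈ Ω, HasFDerivAt F (fderiv ℝ F x) x := fun x hx =>
    ((hF.differentiableOn one_ne_zero).differentiableAt (hΩ.mem_nhds hx)).hasFDerivAt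
  refine integral_bilinear_hasFDerivAt_right_eq_neg_left_of_integrable
    (B := ContinuousLinearMap.mul ℝ ℝ) (f' := fderiv ℝ ψ)
    (g := fun x => F x i) (g' := fun x => (ContinuousLinearMap.proj i).comp (fderiv ℝ F x))
    ?_ ?_ ?_ (fun x _ => (hψ.differentiable one_ne_zero x).hasFDerivAt)
    (fun x hx => hasFDerivAt_pi'.1 (hFd x (hψΩ hx)) i)
  · exact integrable_fderiv_apply_single_mul hΩ hF.continuousOn hψ hψc hψΩ i
  · exact integrable_mul_of_tsupport_subset hΩ hψ.continuous hψc hψΩ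
      (hF.continuousOn_fderiv_apply_single_apply hΩ i)
  · exact integrable_mul_of_tsupport_subset hΩ hψ.continuous hψc hψΩ
      ((continuous_apply i).comp_continuousOn hF.continuousOn)

theorem setIntegral_mul_divergence_eq_neg (hΩ : IsOpen Ω) (hF : ContDiffOn ℝ 1 F Ω)
    (hψ : ContDiff ℝ 1 ψ) (hψc : HasCompactSupport ψ) (hψΩ : tsupport ψ ⊆ Ω) :
    ∫ x in Ω, ψ x * divergence F x = -∫ x in Ω, fderiv ℝ ψ x (F x) := by
  have hψ0 : ∀ x ∉ Ω, x ∉ tsupport ψ := fun x hx h => hx (hψΩ h)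
  rw [setIntegral_eq_integral_of_forall_compl_eq_zero fun x hx => by
      simp [image_eq_zero_of_notMem_tsupport (hψ0 x hx)],
    setIntegral_eq_integral_of_forall_compl_eq_zero fun x hx => by
      simp [fderiv_of_notMem_tsupport ℝ (hψ0 x hx)]]
  simp only [divergence, Finset.mul_sum]
  rw [integral_finsetSum _ fun i _ => integrable_mul_of_tsupport_subset hΩ hψ.continuous hψc hψΩ
      (hF.continuousOn_fderiv_apply_single_apply hΩ i)]
  simp only [integral_mul_fderiv_apply_single_eq_neg hΩ hF hψ hψc hψΩ, Finset.sum_neg_distrib]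
  rw [← integral_finsetSum _ fun i _ =>
    integrable_fderiv_apply_single_mul hΩ hF.continuousOn hψ hψc hψΩ i]
  simp only [ContinuousLinearMap.sum_apply_single_mul]

end IntegrationByParts

theorem MeasureTheory.Measure.map_restrict_eq_of_leftInvOn {α : Type*} [MeasurableSpace α]
    {μ : Measure α} {s : Set α} {σ : α → α} (hs : MeasurableSet s)
    (hσ : AEMeasurable σ (μ.restrict s)) (hmaps : MapsTo σ s s) (hinv : LeftInvOn σ σ s)
    (hmeas : ∀ A ⊆ s, MeasurableSet A → μ (σ '' A) = μ A) :
    (μ.restrict s).map σ = μ.restrict s := by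
  refine Measure.ext fun B hB => ?_
  have himage : σ '' s = s := hmaps.image_subset.antisymm (hinv.surjOn hmaps)
  rw [Measure.map_apply_of_aemeasurable hσ hB, Measure.restrict_apply' hs,
    Measure.restrict_apply hB, ← himage, ← hinv.image_inter', himage,
    hmeas _ inter_subset_right (hB.inter hs)]

theorem IsOpen.eqOn_zero_of_setIntegral_contDiff_smul_eq_zero {E F : Type*}
    [NormedAddCommGroup E] [NormedSpace ℝ E] [FiniteDimensional ℝ E] [MeasurableSpace E]
    [BorelSpace E] [NormedAddCommGroup F] [NormedSpace ℝ F] [CompleteSpace F]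
    {μ : Measure E} [IsLocallyFiniteMeasure μ] [μ.IsOpenPosMeasure]
    {U : Set E} (hU : IsOpen U) {f : E → F} (hf : ContinuousOn f U)
    (h : ∀ g : E → ℝ, ContDiff ℝ ∞ g → HasCompactSupport g → tsupport g ⊆ U →
      ∫ x in U, g x • f x ∂μ = 0) :
    EqOn f 0 U := by
  have hae := hU.ae_eq_zero_of_integral_contDiff_smul_eq_zero
    (hf.locallyIntegrableOn hU.measurableSet) h
  refine Measure.eqOn_open_of_ae_eq (μ := μ) ?_ hU hf continuousOn_const
  filter_upwards [hae, ae_restrict_mem hU.measurableSet] with x hx hxU using hx hxU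

theorem tsupport_indicator_comp_subset_image {X : Type*} [TopologicalSpace X] [T2Space X]
    {Ω : Set X} {σ : X → X} {ψ : X → ℝ} (hσ : ContinuousOn σ Ω) (hinv : LeftInvOn σ σ Ω)
    (hψc : HasCompactSupport ψ) (hψΩ : tsupport ψ ⊆ Ω) :
    tsupport (Ω.indicator (ψ ∘ σ)) ⊆ σ '' tsupport ψ := by
  refine closure_minimal (fun x hx => ?_) (hψc.image_of_continuousOn (hσ.mono hψΩ)).isClosed
  obtain ⟨hxΩ, hψx⟩ : x ∈ Ω ∧ ψ (σ x) ≠ 0 := by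
    simpa [indicator_apply_ne_zero] using hx
  exact ⟨σ x, subset_tsupport _ hψx, hinv hxΩ⟩

theorem fderiv_indicator_comp {E : Type*} [NormedAddCommGroup E] [NormedSpace ℝ E]
    {Ω : Set E} {σ : E → E} {ψ : E → ℝ} (hΩ : IsOpen Ω) {x : E} (hx : x ∈ Ω)
    (hσ : DifferentiableAt ℝ σ x) (hψ : DifferentiableAt ℝ ψ (σ x)) :
    fderiv ℝ (Ω.indicator (ψ ∘ σ)) x = (fderiv ℝ ψ (σ x)).comp (fderiv ℝ σ x) := by
  have hev : Ω.indicator (ψ ∘ σ) =ᶠ[nhds x] ψ ∘ σ := by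
    filter_upwards [hΩ.mem_nhds hx] with y hy using indicator_of_mem hy _
  rw [hev.fderiv_eq, fderiv_comp x hψ hσ]

section Reversibility

variable {ι : Type*} [Fintype ι] [DecidableEq ι] {Ω : Set (ι → ℝ)} {F : (ι → ℝ) → ι → ℝ}
  {σ : (ι → ℝ) → ι → ℝ}

theorem setIntegral_mul_divergence_comp_eq_neg (hΩ : IsOpen Ω) (hF : ContDiffOn ℝ 1 F Ω)
    (hσ : ContDiffOn ℝ 1 σ Ω) (hmaps : MapsTo σ Ω Ω) (hinv : LeftInvOn σ σ Ω)
    (hmeas : ∀ A ⊆ Ω, MeasurableSet A → volume (σ '' A) = volume A)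
    (hFσ : ∀ x ∈ Ω, F (σ x) = -fderiv ℝ σ x (F x))
    {ψ : (ι → ℝ) → ℝ} (hψ : ContDiff ℝ 1 ψ) (hψc : HasCompactSupport ψ) (hψΩ : tsupport ψ ⊆ Ω) :
    ∫ x in Ω, ψ x * divergence F (σ x) = -∫ x in Ω, ψ x * divergence F x := by
  set χ := Ω.indicator (ψ ∘ σ)
  have hχK := tsupport_indicator_comp_subset_image hσ.continuousOn hinv hψc hψΩ
  have hχΩ : tsupport χ ⊆ Ω := hχK.trans ((image_mono hψΩ).trans hmaps.image_subset)
  have hχc : HasCompactSupport χ :=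
    (hψc.image_of_continuousOn (hσ.continuousOn.mono hψΩ)).of_isClosed_subset
      (isClosed_tsupport _) hχK
  have hχ : ContDiff ℝ 1 χ :=
    ((hψ.comp_contDiffOn hσ).congr fun x hx => indicator_of_mem hx _).contDiff_of_tsupport_subset
      hΩ hχΩ
  have hσd : ∀ x ∈ Ω, DifferentiableAt ℝ σ x := fun x hx =>
    (hσ.differentiableOn one_ne_zero).differentiableAt (hΩ.mem_nhds hx)
  have hmap : (volume.restrict Ω).map σ = volume.restrict Ω :=
    Measure.map_restrict_eq_of_leftInvOn hΩ.measurableSet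
      (hσ.continuousOn.aemeasurable hΩ.measurableSet) hmaps hinv hmeas
  have integral_comp : ∀ g : (ι → ℝ) → ℝ, ContinuousOn g Ω →
      ∫ x in Ω, g (σ x) = ∫ x in Ω, g x := fun g hg => by
    rw [← integral_map (hσ.continuousOn.aemeasurable hΩ.measurableSet)
      (by rw [hmap]; exact hg.aestronglyMeasurable hΩ.measurableSet), hmap]
  calc ∫ x in Ω, ψ x * divergence F (σ x)
      = ∫ x in Ω, χ (σ x) * divergence F (σ x) :=
        setIntegral_congr_fun hΩ.measurableSet fun x hx => by
          simp [χ, indicator_of_mem (hmaps hx), hinv hx]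
    _ = ∫ x in Ω, χ x * divergence F x :=
        integral_comp _ (hχ.continuous.continuousOn.mul (hF.continuousOn_divergence hΩ))
    _ = -∫ x in Ω, fderiv ℝ χ x (F x) := setIntegral_mul_divergence_eq_neg hΩ hF hχ hχc hχΩ
    _ = ∫ x in Ω, fderiv ℝ ψ (σ x) (F (σ x)) := by
        rw [← integral_neg]
        refine setIntegral_congr_fun hΩ.measurableSet fun x hx => ?_
        simp [χ, fderiv_indicator_comp hΩ hx (hσd x hx) (hψ.differentiable one_ne_zero _),
          hFσ x hx]
    _ = ∫ x in Ω, fderiv ℝ ψ x (F x) :=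
        integral_comp _ ((hψ.continuous_fderiv one_ne_zero).continuousOn.clm_apply hF.continuousOn)
    _ = -∫ x in Ω, ψ x * divergence F x := by
        rw [setIntegral_mul_divergence_eq_neg hΩ hF hψ hψc hψΩ, neg_neg]

theorem divergence_comp_add_divergence_eq_zero (hΩ : IsOpen Ω) (hF : ContDiffOn ℝ 1 F Ω)
    (hσ : ContDiffOn ℝ 1 σ Ω) (hmaps : MapsTo σ Ω Ω) (hinv : LeftInvOn σ σ Ω)
    (hmeas : ∀ A ⊆ Ω, MeasurableSet A → volume (σ '' A) = volume A)
    (hFσ : ∀ x ∈ Ω, F (σ x) = -fderiv ℝ σ x (F x)) {x : ι → ℝ} (hx : x ∈ Ω) :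
    divergence F (σ x) + divergence F x = 0 := by
  have hD := hF.continuousOn_divergence hΩ
  have hDσ : ContinuousOn (fun x => divergence F (σ x)) Ω := hD.comp hσ.continuousOn hmaps
  refine hΩ.eqOn_zero_of_setIntegral_contDiff_smul_eq_zero (μ := volume) (hDσ.add hD)
    (fun ψ hψ hψc hψΩ => ?_) hx
  have hψ1 : ContDiff ℝ 1 ψ := hψ.of_le (by norm_num)
  simp only [Pi.add_apply, smul_eq_mul, mul_add]
  rw [integral_add
    (integrable_mul_of_tsupport_subset hΩ hψ.continuous hψc hψΩ hDσ).integrableOn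
    (integrable_mul_of_tsupport_subset hΩ hψ.continuous hψc hψΩ hD).integrableOn,
    setIntegral_mul_divergence_comp_eq_neg hΩ hF hσ hmaps hinv hmeas hFσ hψ1 hψc hψΩ,
    neg_add_cancel]

end Reversibility

theorem eq_neg_fderiv_apply_of_reversing {E : Type*} [NormedAddCommGroup E] [NormedSpace ℝ E]
    {F σ : E → E} {φ : ℝ → E → E} {x : E} (hσ : DifferentiableAt ℝ σ x) (hx0 : φ 0 x = x)
    (hx : HasDerivAt (fun t => φ t x) (F x) 0)
    (hσx : HasDerivAt (fun t => φ t (σ x)) (F (σ x)) 0)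
    (hrev : ∀ t, φ t (σ x) = σ (φ (-t) x)) :
    F (σ x) = -fderiv ℝ σ x (F x) := by
  have hback : HasDerivAt (fun t => φ (-t) x) (-F x) 0 := by
    simpa [Function.comp_def] using
      HasDerivAt.scomp (h := fun t : ℝ => -t) 0 (by simpa using hx) (hasDerivAt_neg' 0)
  have hσ' : HasFDerivAt σ (fderiv ℝ σ x) (φ (-0) x) := by
    rw [neg_zero, hx0]; exact hσ.hasFDerivAt
  have := hσ'.comp_hasDerivAt 0 hback
  rw [map_neg] at this
  exact hσx.unique (by simpa only [funext hrev, Function.comp_def] using this)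

def periodSubgroup {α β : Type*} [AddGroup α] (c : α → β) : AddSubgroup α where
  carrier := {p | Periodic c p}
  zero_mem' := fun x => by rw [add_zero]
  add_mem' := Periodic.add_period
  neg_mem' := Periodic.neg

theorem isClosed_periodSubgroup {X : Type*} [TopologicalSpace X] [T2Space X] {c : ℝ → X}
    (hc : Continuous c) : IsClosed (periodSubgroup c : Set ℝ) := by
  have : (periodSubgroup c : Set ℝ) = ⋂ x, {p | c (x + p) = c x} := by
    ext p; simp [periodSubgroup, Periodic]
  rw [this]
  exact isClosed_iInter fun x =>
    isClosed_eq (hc.comp (continuous_const.add continuous_id)) continuous_const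

theorem exists_pair_ne_of_reflection {X : Type*} [TopologicalSpace X] [T2Space X] {c : ℝ → X}
    (hc : Continuous c) (hperiodic_of_eq : ∀ s t, c s = c t → Periodic c (t - s)) {T : ℝ}
    (hT : T ≠ 0) (hTper : Periodic c T) {t₀ : ℝ} (ht₀ : c t₀ ≠ c 0) :
    ∃ s₁ s₂, c (t₀ - s₁) = c s₁ ∧ c (t₀ - s₂) = c s₂ ∧ c s₁ ≠ c s₂ := by
  obtain ⟨a, ha⟩ : ∃ a, periodSubgroup c = AddSubgroup.closure {a} := by
    refine (AddSubgroup.dense_or_cyclic _).resolve_left fun hdense => ht₀ ?_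
    have ht₀per : t₀ ∈ (periodSubgroup c : Set ℝ) := by
      rw [← (isClosed_periodSubgroup hc).closure_eq, hdense.closure_eq]; trivial
    simpa using ht₀per 0
  have hperiod : ∀ p, Periodic c p ↔ ∃ k : ℤ, k • a = p := fun p => by
    change p ∈ periodSubgroup c ↔ _
    rw [ha, AddSubgroup.mem_closure_singleton]
  have ha0 : a ≠ 0 := by
    rintro rfl
    obtain ⟨k, hk⟩ := (hperiod T).1 hTper
    exact hT (by simpa using hk.symm)
  have hhalf : ¬Periodic c (a / 2) := fun h => by
    obtain ⟨k, hk⟩ := (hperiod _).1 h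
    rw [zsmul_eq_mul] at hk
    have : ((2 * k : ℤ) : ℝ) * a = (1 : ℤ) * a := by push_cast; linarith
    have : 2 * k = 1 := by exact_mod_cast mul_right_cancel₀ ha0 this
    omega
  refine ⟨t₀ / 2, (t₀ + a) / 2, by ring_nf, ?_, fun h => hhalf ?_⟩
  · have ha : Periodic c a := (hperiod a).2 ⟨1, one_zsmul a⟩
    rw [show t₀ - (t₀ + a) / 2 = (t₀ + a) / 2 - a by ring]
    exact ha.sub_eq _
  · convert hperiodic_of_eq _ _ h using 1; ring

theorem cycle_contains_two_zero_divergence_points_general {n : ℕ}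
    (Ω : Set (Fin n → ℝ)) (hΩ : IsOpen Ω)
    (F : (Fin n → ℝ) → (Fin n → ℝ)) (hF : ContDiffOn ℝ 1 F Ω)
    (φ : ℝ → (Fin n → ℝ) → (Fin n → ℝ))
    (hmem : ∀ (t : ℝ), ∀ z ∈ Ω, φ t z ∈ Ω)
    (hφ0 : ∀ z ∈ Ω, φ 0 z = z)
    (hgroup : ∀ (s t : ℝ), ∀ z ∈ Ω, φ (s + t) z = φ s (φ t z))
    (hderiv : ∀ z ∈ Ω, ∀ t : ℝ, HasDerivAt (fun u => φ u z) (F (φ t z)) t)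
    (σ : (Fin n → ℝ) → (Fin n → ℝ)) (hσC1 : ContDiffOn ℝ 1 σ Ω)
    (hmaps : Set.MapsTo σ Ω Ω) (hσinv : ∀ z ∈ Ω, σ (σ z) = z)
    (hrev : ∀ (t : ℝ), ∀ z ∈ Ω, φ t (σ z) = σ (φ (-t) z))
    (hmeas : ∀ A ⊆ Ω, MeasurableSet A → volume (σ '' A) = volume A)
    (z : Fin n → ℝ) (hz : z ∈ Ω) (T : ℝ) (hT : 0 < T)
    (hper : φ T z = z)
    (γ : Set (Fin n → ℝ)) (hγ : γ = Set.range fun t => φ t z)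
    (hγinv : σ '' γ = γ) (hzne : σ z ≠ z) :
    ∃ p₁ ∈ γ, ∃ p₂ ∈ γ, p₁ ≠ p₂ ∧
      (∑ i : Fin n, fderiv ℝ F p₁ (Pi.single i 1) i = 0) ∧
      (∑ i : Fin n, fderiv ℝ F p₂ (Pi.single i 1) i = 0) := by
  have hFσ : ∀ x ∈ Ω, F (σ x) = -fderiv ℝ σ x (F x) := fun x hx =>
    eq_neg_fderiv_apply_of_reversing
      ((hσC1.differentiableOn one_ne_zero).differentiableAt (hΩ.mem_nhds hx)) (hφ0 x hx)
      (by simpa [hφ0 x hx] using hderiv x hx 0)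
      (by simpa [hφ0 _ (hmaps hx)] using hderiv (σ x) (hmaps hx) 0) (fun t => hrev t x hx)
  set c : ℝ → Fin n → ℝ := fun t => φ t z
  have hc0 : c 0 = z := hφ0 z hz
  have hperiodic_of_eq : ∀ s t, c s = c t → Periodic c (t - s) := fun s t hst u => by
    calc c (u + (t - s)) = φ (u - s) (c t) := by
          rw [← hgroup _ _ z hz]; congr 1; ring
      _ = φ (u - s) (c s) := by rw [hst]
      _ = c u := by rw [← hgroup _ _ z hz, sub_add_cancel]
  obtain ⟨t₀, ht₀⟩ : σ z ∈ range c := by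
    rw [← hγ, ← hγinv, hγ]; exact mem_image_of_mem σ ⟨0, hc0⟩
  have hσc : ∀ s, σ (c s) = c (t₀ - s) := fun s => by
    rw [sub_eq_neg_add, show c (-s + t₀) = φ (-s + t₀) z from rfl, hgroup _ _ z hz,
      show φ t₀ z = σ z from ht₀, hrev _ z hz, neg_neg]
  have hTper : Periodic c T := by simpa using hperiodic_of_eq 0 T (hc0.trans hper.symm)
  obtain ⟨s₁, s₂, h₁, h₂, hne⟩ := exists_pair_ne_of_reflection
    (continuous_iff_continuousAt.2 fun t => (hderiv z hz t).continuousAt) hperiodic_of_eq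
    hT.ne' hTper
    (show c t₀ ≠ c 0 by rwa [hc0, ht₀])
  have hzero : ∀ s, c (t₀ - s) = c s → divergence F (c s) = 0 := fun s hs => by
    have := divergence_comp_add_divergence_eq_zero hΩ hF hσC1 hmaps hσinv hmeas hFσ
      (hmem s z hz)
    rw [hσc, hs] at this
    linarith
  exact ⟨c s₁, hγ ▸ mem_range_self _, c s₂, hγ ▸ mem_range_self _, hne, hzero s₁ h₁,
    hzero s₂ h₂⟩

/-- If σ is a measure-preserving reversibility and γ is a σ-invariant cycle
containing a point z with σ(z) ≠ z, then γ contains at least two distinct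
zero-divergence points. -/
theorem cycle_contains_two_zero_divergence_points {n : ℕ}
    (Ω : Set (Fin n → ℝ)) (hΩ : IsOpen Ω) (hconn : IsConnected Ω)
    (F : (Fin n → ℝ) → (Fin n → ℝ)) (hF : ContDiffOn ℝ 1 F Ω)
    (φ : ℝ → (Fin n → ℝ) → (Fin n → ℝ))
    (hmem : ∀ (t : ℝ), ∀ z ∈ Ω, φ t z ∈ Ω)
    (hφ0 : ∀ z ∈ Ω, φ 0 z = z)
    (hgroup : ∀ (s t : ℝ), ∀ z ∈ Ω, φ (s + t) z = φ s (φ t z))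
    (hderiv : ∀ z ∈ Ω, ∀ t : ℝ, HasDerivAt (fun u => φ u z) (F (φ t z)) t)
    (σ : (Fin n → ℝ) → (Fin n → ℝ)) (hσC1 : ContDiffOn ℝ 1 σ Ω)
    (hmaps : Set.MapsTo σ Ω Ω) (hσinv : ∀ z ∈ Ω, σ (σ z) = z)
    (hrev : ∀ (t : ℝ), ∀ z ∈ Ω, φ t (σ z) = σ (φ (-t) z))
    (hmeas : ∀ A ⊆ Ω, MeasurableSet A → volume (σ '' A) = volume A)
    (z : Fin n → ℝ) (hz : z ∈ Ω) (T : ℝ) (hT : 0 < T)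
    (hper : φ T z = z)
    (γ : Set (Fin n → ℝ)) (hγ : γ = Set.range fun t => φ t z)
    (hγinv : σ '' γ = γ) (hzne : σ z ≠ z) :
    ∃ p₁ ∈ γ, ∃ p₂ ∈ γ, p₁ ≠ p₂ ∧
      (∑ i : Fin n, fderiv ℝ F p₁ (Pi.single i 1) i = 0) ∧
      (∑ i : Fin n, fderiv ℝ F p₂ (Pi.single i 1) i = 0) :=
  cycle_contains_two_zero_divergence_points_general Ω hΩ F hF φ hmem hφ0 hgroup hderiv σ hσC1 hmaps
    hσinv hrev hmeas z hz T hT hper γ hγ hγinv hzne
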